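/- Let h : [−1,1) → ℝ be absolutely monotone, i.e., infinitely differentiable with h^{(i)}(t) ≥ 0 for all integers i ≥ 0 and all t ∈ [−1,1). Let k ≥ 1 be an integer, ε ∈ {0,1} with k − 1 + ε ≥ 1, and δ ≥ 0 a real number. For each n ≥ 2, let M_n ≥ 2 be an integer, and suppose lim_{n→∞} M_n / n^{k−1+ε} = (2−ε)/(k−1+ε)! + δ. For integers n ≥ 2 and M ≥ 2, let E(n,M) denote the infimum of ∑_{x,y ∈ C, x ≠ y} h(⟨x,y⟩) over all sets C ⊆ S^{n−1} of M points. Then liminf_{n→∞} E(n, M_n)/M_n² ≥ h(0). -/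

import Mathlib

open scoped RealInnerProductSpace
open Filter Set Finset

/-- `h` is absolutely monotone on `[-1,1)`: it is infinitely differentiable there and all
its derivatives are nonnegative there. -/
def AbsolutelyMonotone (h : ℝ → ℝ) : Prop :=
  ContDiffOn ℝ (⊤ : ℕ∞) h (Set.Ico (-1 : ℝ) 1) ∧
    ∀ i : ℕ, ∀ t ∈ Set.Ico (-1 : ℝ) 1,
      0 ≤ iteratedDerivWithin i h (Set.Ico (-1 : ℝ) 1) t

/-- The `h`-energy of a finite set `C` on the sphere: the sum of `h(⟨x,y⟩)` over ordered
pairs of distinct points of `C`. -/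
noncomputable def sphereEnergy (n : ℕ) (h : ℝ → ℝ) (C : Finset (EuclideanSpace ℝ (Fin n))) : ℝ :=
  letI := Classical.decEq (EuclideanSpace ℝ (Fin n))
  ∑ p ∈ C.offDiag, h ⟪p.1, p.2⟫



private lemma myIteratedDerivWithin_eq {h : ℝ → ℝ} {x : ℝ} (hx : x ∈ Set.Ioo (-1 : ℝ) 1)
    (i : ℕ) : iteratedDerivWithin i h (Set.Ico (-1 : ℝ) 1) x = iteratedDeriv i h x := by
  have hn : Set.Ico (-1 : ℝ) 1 ∈ nhds x := Ico_mem_nhds hx.1 hx.2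
  rw [iteratedDerivWithin_eq_iteratedFDerivWithin, iteratedDeriv_eq_iteratedFDeriv]
  congr 1
  have := iteratedFDerivWithin_inter (𝕜 := ℝ) (f := h) (s := Set.univ) (n := i) (x := x) hn
  rw [Set.univ_inter] at this
  rw [this, iteratedFDerivWithin_univ]

private lemma myDerivFacts {h : ℝ → ℝ} (hh : AbsolutelyMonotone h) :
    ConvexOn ℝ (Set.Ico (-1 : ℝ) 1) h ∧ MonotoneOn h (Set.Ico (-1 : ℝ) 1) := by
  have hcont : ContinuousOn h (Set.Ico (-1 : ℝ) 1) := hh.1.continuousOn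
  have hint : interior (Set.Ico (-1 : ℝ) 1) = Set.Ioo (-1 : ℝ) 1 := interior_Ico
  have hsub : Set.Ioo (-1 : ℝ) 1 ⊆ Set.Ico (-1 : ℝ) 1 := Set.Ioo_subset_Ico_self
  have hd1 : DifferentiableOn ℝ h (Set.Ioo (-1 : ℝ) 1) := by
    intro x hx
    exact ((hh.1.contDiffAt (Ico_mem_nhds hx.1 hx.2)).differentiableAt (by simp)).differentiableWithinAt
  have hcd : ContDiffOn ℝ (⊤ : ℕ∞) h (Set.Ioo (-1 : ℝ) 1) := hh.1.mono hsub
  have hd2 : DifferentiableOn ℝ (deriv h) (Set.Ioo (-1 : ℝ) 1) := by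
    have := hcd.deriv_of_isOpen isOpen_Ioo (m := 1) (WithTop.coe_le_coe.mpr le_top)
    exact this.differentiableOn one_ne_zero
  have hder1 : ∀ x ∈ Set.Ioo (-1 : ℝ) 1, 0 ≤ deriv h x := by
    intro x hx
    have := hh.2 1 x (hsub hx)
    rwa [myIteratedDerivWithin_eq hx, iteratedDeriv_one] at this
  have hder2 : ∀ x ∈ Set.Ioo (-1 : ℝ) 1, 0 ≤ deriv^[2] h x := by
    intro x hx
    have := hh.2 2 x (hsub hx)
    rwa [myIteratedDerivWithin_eq hx, iteratedDeriv_eq_iterate] at this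
  constructor
  · exact convexOn_of_deriv2_nonneg (convex_Ico _ _) hcont (hint ▸ hd1) (hint ▸ hd2)
      (fun x hx => hder2 x (hint ▸ hx))
  · exact monotoneOn_of_deriv_nonneg (convex_Ico _ _) hcont (hint ▸ hd1)
      (fun x hx => hder1 x (hint ▸ hx))



private lemma myInnerMem {n : ℕ} {x y : EuclideanSpace ℝ (Fin n)}
    (hx : ‖x‖ = 1) (hy : ‖y‖ = 1) (hxy : x ≠ y) : ⟪x, y⟫ ∈ Set.Ico (-1 : ℝ) 1 := by
  have habs := abs_real_inner_le_norm x y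
  rw [hx, hy, one_mul] at habs
  constructor
  · nlinarith [neg_abs_le ((inner ℝ x y : ℝ))]
  · exact (inner_lt_one_iff_real_of_norm_eq_one hx hy).2 hxy

private lemma myEnergyLower {h : ℝ → ℝ} (hconv : ConvexOn ℝ (Set.Ico (-1 : ℝ) 1) h)
    (hmono : MonotoneOn h (Set.Ico (-1 : ℝ) 1))
    {n m : ℕ} (hm : 2 ≤ m) (C : Finset (EuclideanSpace ℝ (Fin n)))
    (hC : (C : Set (EuclideanSpace ℝ (Fin n))) ⊆ Metric.sphere 0 1) (hcard : C.card = m) :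
    (m : ℝ) * ((m : ℝ) - 1) * h (-1 / ((m : ℝ) - 1)) ≤ sphereEnergy n h C := by
  classical
  have hm1 : (1 : ℝ) ≤ (m : ℝ) - 1 := by
    have : (2 : ℝ) ≤ (m : ℝ) := by exact_mod_cast hm
    linarith
  have hmpos : (0 : ℝ) < (m : ℝ) := by linarith
  have hnorm : ∀ x ∈ C, ‖x‖ = 1 := by
    intro x hx
    have := hC hx
    rwa [mem_sphere_zero_iff_norm] at this
  set z : EuclideanSpace ℝ (Fin n) × EuclideanSpace ℝ (Fin n) → ℝ := fun p => ⟪p.1, p.2⟫ with hz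
  have hzmem : ∀ p ∈ C.offDiag, z p ∈ Set.Ico (-1 : ℝ) 1 := by
    intro p hp
    rw [Finset.mem_offDiag] at hp
    exact myInnerMem (hnorm _ hp.1) (hnorm _ hp.2.1) hp.2.2
  -- cardinality of offDiag
  have hcardOff : ((C.offDiag.card : ℝ)) = (m : ℝ) * ((m : ℝ) - 1) := by
    rw [Finset.offDiag_card, hcard]
    have hle : m ≤ m * m := Nat.le_mul_of_pos_left m (by omega)
    push_cast [Nat.cast_sub hle]
    ring
  have hWpos : (0 : ℝ) < (m : ℝ) * ((m : ℝ) - 1) := by nlinarith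
  set w : ℝ := ((m : ℝ) * ((m : ℝ) - 1))⁻¹ with hw
  have hwpos : 0 < w := inv_pos.2 hWpos
  have hsumw : ∑ _p ∈ C.offDiag, w = 1 := by
    rw [Finset.sum_const, nsmul_eq_mul, hcardOff, hw, mul_inv_cancel₀ (ne_of_gt hWpos)]
  -- total inner product sum
  have hS : -(m : ℝ) ≤ ∑ p ∈ C.offDiag, z p := by
    have htotal : ∑ p ∈ C ×ˢ C, z p = ⟪∑ x ∈ C, x, ∑ x ∈ C, x⟫ := by
      rw [sum_inner]
      rw [Finset.sum_product]
      exact Finset.sum_congr rfl fun x _ => by rw [inner_sum]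
    have htot_nonneg : 0 ≤ ∑ p ∈ C ×ˢ C, z p := htotal ▸ real_inner_self_nonneg
    have hsplit : ∑ p ∈ C ×ˢ C, z p = (∑ p ∈ C.diag, z p) + ∑ p ∈ C.offDiag, z p := by
      rw [← Finset.diag_union_offDiag C, Finset.sum_union (Finset.disjoint_diag_offDiag C)]
    have hdiag : ∑ p ∈ C.diag, z p = (m : ℝ) := by
      rw [Finset.sum_diag]
      have : ∀ x ∈ C, z (x, x) = 1 := by
        intro x hx
        simp only [hz]
        rw [real_inner_self_eq_norm_mul_norm, hnorm x hx]; norm_num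
      rw [Finset.sum_congr rfl this, Finset.sum_const, hcard, nsmul_eq_mul, mul_one]
    have := htot_nonneg
    rw [hsplit, hdiag] at this
    linarith
  -- Jensen
  set c : ℝ := ∑ p ∈ C.offDiag, w • z p with hc
  have hcmem : c ∈ Set.Ico (-1 : ℝ) 1 :=
    (convex_Ico (-1 : ℝ) 1).sum_mem (fun p _ => le_of_lt hwpos) hsumw hzmem
  have hjensen : h c ≤ ∑ p ∈ C.offDiag, w • h (z p) :=
    hconv.map_sum_le (fun p _ => le_of_lt hwpos) hsumw hzmem
  have htmem : -1 / ((m : ℝ) - 1) ∈ Set.Ico (-1 : ℝ) 1 := by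
    constructor
    · rw [neg_div, neg_le_neg_iff, div_le_one (by linarith)]; linarith
    · have : -1 / ((m : ℝ) - 1) < 0 := by
        apply div_neg_of_neg_of_pos <;> linarith
      linarith
  have htc : -1 / ((m : ℝ) - 1) ≤ c := by
    have : c = w * ∑ p ∈ C.offDiag, z p := by
      rw [hc, Finset.mul_sum]; exact Finset.sum_congr rfl fun p _ => rfl
    rw [this]
    have h1 : w * (-(m : ℝ)) ≤ w * ∑ p ∈ C.offDiag, z p :=
      mul_le_mul_of_nonneg_left hS (le_of_lt hwpos)
    have h2 : w * (-(m : ℝ)) = -1 / ((m : ℝ) - 1) := by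
      rw [hw]; field_simp
    linarith
  have hmono' : h (-1 / ((m : ℝ) - 1)) ≤ h c := hmono htmem hcmem htc
  have hfinal : h c ≤ w * sphereEnergy n h C := by
    have : ∑ p ∈ C.offDiag, w • h (z p) = w * sphereEnergy n h C := by
      rw [sphereEnergy, Finset.mul_sum]
      exact Finset.sum_congr rfl fun p _ => rfl
    linarith [hjensen, this.symm.le, this.le]
  have := le_trans hmono' hfinal
  calc (m : ℝ) * ((m : ℝ) - 1) * h (-1 / ((m : ℝ) - 1))
      ≤ (m : ℝ) * ((m : ℝ) - 1) * (w * sphereEnergy n h C) :=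
        mul_le_mul_of_nonneg_left this (le_of_lt hWpos)
    _ = sphereEnergy n h C := by
        rw [hw]; field_simp



private noncomputable def myVec (n s : ℕ) (S : Finset (Fin n)) : EuclideanSpace ℝ (Fin n) :=
  (WithLp.equiv 2 (Fin n → ℝ)).symm (fun j => if j ∈ S then (Real.sqrt s)⁻¹ else 0)

private lemma myVec_inner {n s : ℕ} (hs : 1 ≤ s) (S T : Finset (Fin n)) :
    ⟪myVec n s S, myVec n s T⟫ = ((S ∩ T).card : ℝ) / (s : ℝ) := by
  have hspos : (0 : ℝ) < (s : ℝ) := by exact_mod_cast hs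
  have h1 : ⟪myVec n s S, myVec n s T⟫ =
      ∑ j : Fin n, (if j ∈ S then (Real.sqrt s)⁻¹ else 0) * (if j ∈ T then (Real.sqrt s)⁻¹ else 0) := by
    rw [PiLp.inner_apply]
    apply Finset.sum_congr rfl
    intro j _
    simp [myVec, RCLike.inner_apply, starRingEnd_apply, star_trivial]; split_ifs <;> rfl
  rw [h1]
  have h2 : ∀ j : Fin n, (if j ∈ S then (Real.sqrt s)⁻¹ else 0) * (if j ∈ T then (Real.sqrt s)⁻¹ else 0)
      = if j ∈ S ∩ T then (Real.sqrt s)⁻¹ * (Real.sqrt s)⁻¹ else 0 := by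
    intro j
    by_cases hS : j ∈ S <;> by_cases hT : j ∈ T <;> simp [hS, hT, Finset.mem_inter]
  rw [Finset.sum_congr rfl fun j _ => h2 j, Finset.sum_ite_mem, Finset.univ_inter,
    Finset.sum_const, nsmul_eq_mul]
  have : (Real.sqrt s)⁻¹ * (Real.sqrt s)⁻¹ = (s : ℝ)⁻¹ := by
    rw [← mul_inv]
    congr 1
    exact Real.mul_self_sqrt (le_of_lt hspos)
  rw [this, div_eq_mul_inv]

private lemma myVec_norm {n s : ℕ} (hs : 1 ≤ s) {S : Finset (Fin n)} (hS : S.card = s) :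
    ‖myVec n s S‖ = 1 := by
  have hspos : (0 : ℝ) < (s : ℝ) := by exact_mod_cast hs
  have h := myVec_inner hs S S
  rw [Finset.inter_self, hS, div_self (ne_of_gt hspos), real_inner_self_eq_norm_mul_norm] at h
  nlinarith [norm_nonneg (myVec n s S)]

private lemma myGoodConfig {s n m : ℕ} (hs : 1 ≤ s) (hmn : m ≤ n.choose s) :
    ∃ C : Finset (EuclideanSpace ℝ (Fin n)),
      (C : Set (EuclideanSpace ℝ (Fin n))) ⊆ Metric.sphere 0 1 ∧ C.card = m ∧
      ∀ x ∈ C, ∀ y ∈ C, x ≠ y → ⟪x, y⟫ ≤ 1 - 1 / (s : ℝ) := by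
  classical
  have hspos : (0 : ℝ) < (s : ℝ) := by exact_mod_cast hs
  have hcardF : (Finset.powersetCard s (Finset.univ : Finset (Fin n))).card = n.choose s := by
    rw [Finset.card_powersetCard, Finset.card_univ, Fintype.card_fin]
  obtain ⟨G, hGsub, hGcard⟩ := Finset.exists_subset_card_eq (hcardF ▸ hmn)
  have hGmem : ∀ S ∈ G, S.card = s := by
    intro S hSG
    exact (Finset.mem_powersetCard.1 (hGsub hSG)).2
  -- injectivity on G
  have hinj : Set.InjOn (myVec n s) G := by
    intro S hS T hT hST
    have hScard := hGmem S hS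
    have hTcard := hGmem T hT
    have h1 : ⟪myVec n s S, myVec n s T⟫ = 1 := by
      rw [hST, myVec_inner hs, Finset.inter_self, hTcard, div_self (ne_of_gt hspos)]
    rw [myVec_inner hs] at h1
    have hcardST : (S ∩ T).card = s := by
      field_simp at h1
      exact_mod_cast h1
    have hSTeq : S ∩ T = S := Finset.eq_of_subset_of_card_le Finset.inter_subset_left
      (by rw [hScard, hcardST])
    have hSsubT : S ⊆ T := hSTeq ▸ Finset.inter_subset_right
    exact Finset.eq_of_subset_of_card_le hSsubT (by rw [hScard, hTcard])
  refine ⟨G.image (myVec n s), ?_, ?_, ?_⟩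
  · intro x hx
    simp only [Finset.coe_image, Set.mem_image, Finset.mem_coe] at hx
    obtain ⟨S, hSG, rfl⟩ := hx
    rw [Metric.mem_sphere, dist_zero_right, myVec_norm hs (hGmem S hSG)]
  · rw [Finset.card_image_of_injOn hinj, hGcard]
  · intro x hx y hy hxy
    simp only [Finset.mem_image] at hx hy
    obtain ⟨S, hSG, rfl⟩ := hx
    obtain ⟨T, hTG, rfl⟩ := hy
    have hST : S ≠ T := fun hST => hxy (by rw [hST])
    rw [myVec_inner hs]
    have hScard := hGmem S hSG
    have hTcard := hGmem T hTG
    have hlt : (S ∩ T).card < s := by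
      by_contra hge
      push_neg at hge
      have h1 : S ∩ T = S := Finset.eq_of_subset_of_card_le Finset.inter_subset_left
        (by rw [hScard]; exact hge)
      have h2 : S ⊆ T := h1 ▸ Finset.inter_subset_right
      exact hST (Finset.eq_of_subset_of_card_le h2 (by rw [hScard, hTcard]))
    have hcast : ((S ∩ T).card : ℝ) + 1 ≤ (s : ℝ) := by exact_mod_cast hlt
    rw [div_le_iff₀ hspos]
    have heq : (1 - 1 / (s : ℝ)) * s = (s : ℝ) - 1 := by field_simp
    rw [heq]
    linarith



private lemma myChooseTendsto {s e : ℕ} (he : e < s) :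
    Tendsto (fun n : ℕ => ((n.choose s : ℝ)) / (n : ℝ) ^ e) atTop atTop := by
  have hfact : (0:ℝ) < (Nat.factorial s : ℝ) := by positivity
  have hc : (0:ℝ) < 2 ^ s * (Nat.factorial s : ℝ) := by positivity
  apply tendsto_atTop_mono' atTop
    (show ∀ᶠ n : ℕ in atTop,
      (n : ℝ) / (2 ^ s * (Nat.factorial s : ℝ)) ≤ ((n.choose s : ℝ)) / (n : ℝ) ^ e from ?_)
  case _ => exact Tendsto.atTop_div_const hc tendsto_natCast_atTop_atTop
  · filter_upwards [eventually_ge_atTop (2 * s), eventually_ge_atTop 1] with n hn2s hn1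
    have hN1 : (1:ℝ) ≤ (n:ℝ) := by exact_mod_cast hn1
    have hNpos : (0:ℝ) < (n:ℝ) := by linarith
    rw [div_le_div_iff₀ hc (pow_pos hNpos e)]
    have h1 : ((n + 1 - s : ℕ) ^ s : ℝ) / (Nat.factorial s : ℝ) ≤ (n.choose s : ℝ) :=
      Nat.pow_le_choose s n
    have hD : ((n + 1 - s : ℕ) : ℝ) ^ s ≤ (n.choose s : ℝ) * (Nat.factorial s : ℝ) := by
      rw [div_le_iff₀ hfact] at h1
      exact_mod_cast h1
    have h2n : n ≤ 2 * (n + 1 - s) := by omega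
    have h2 : (n : ℝ) ≤ 2 * ((n + 1 - s : ℕ) : ℝ) := by exact_mod_cast h2n
    have hxnn : (0:ℝ) ≤ ((n + 1 - s : ℕ) : ℝ) := Nat.cast_nonneg _
    have hC : (n:ℝ) ^ s ≤ 2 ^ s * ((n + 1 - s : ℕ) : ℝ) ^ s := by
      calc (n:ℝ) ^ s ≤ (2 * ((n + 1 - s : ℕ) : ℝ)) ^ s :=
            pow_le_pow_left₀ (by linarith) h2 s
        _ = 2 ^ s * ((n + 1 - s : ℕ) : ℝ) ^ s := by rw [mul_pow]
    have hB : (n:ℝ) * (n:ℝ) ^ e ≤ (n:ℝ) ^ s := by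
      have : (n:ℝ) * (n:ℝ) ^ e = (n:ℝ) ^ (e + 1) := by rw [pow_succ]; ring
      rw [this]
      exact pow_le_pow_right₀ hN1 (by omega)
    have h2spos : (0:ℝ) < (2:ℝ)^s := by positivity
    calc (n:ℝ) * (n:ℝ) ^ e ≤ (n:ℝ) ^ s := hB
      _ ≤ 2 ^ s * ((n + 1 - s : ℕ) : ℝ) ^ s := hC
      _ ≤ 2 ^ s * ((n.choose s : ℝ) * (Nat.factorial s : ℝ)) :=
          mul_le_mul_of_nonneg_left hD (le_of_lt h2spos)
      _ = (n.choose s : ℝ) * (2 ^ s * (Nat.factorial s : ℝ)) := by ring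

private lemma myEventuallyChoose {s e : ℕ} (he : e < s) {M : ℕ → ℕ} {L : ℝ}
    (hlim : Tendsto (fun n : ℕ => (M n : ℝ) / (n : ℝ) ^ e) atTop (nhds L)) :
    ∀ᶠ n : ℕ in atTop, M n ≤ n.choose s := by
  have h3 : ∀ᶠ n : ℕ in atTop, (L + 1 : ℝ) ≤ ((n.choose s : ℝ)) / (n : ℝ) ^ e :=
    (myChooseTendsto he).eventually_ge_atTop _
  have h4 : ∀ᶠ n : ℕ in atTop, (M n : ℝ) / (n : ℝ) ^ e < L + 1 :=
    hlim.eventually_lt_const (by linarith)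
  filter_upwards [h3, h4, eventually_ge_atTop 1] with n h3 h4 hn1
  have hNpos : (0:ℝ) < (n:ℝ) ^ e := by
    have : (0:ℝ) < (n:ℝ) := by exact_mod_cast hn1
    positivity
  have : (M n : ℝ) < (n.choose s : ℝ) := by
    have := lt_of_lt_of_le h4 h3
    rw [div_lt_div_iff₀ hNpos hNpos] at this
    nlinarith
  exact_mod_cast this.le

/-- Asymptotic consequence of the universal lower bound for energy on Euclidean spheres:
if the cardinalities `M n` grow like `((2-ε)/(k-1+ε)! + δ) n^{k-1+ε}`, then the normalized
minimal energies `E (n, M n) / (M n)²` have `liminf` at least `h(0)`. -/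
theorem ulb_asymptotics_sphere
    (h : ℝ → ℝ) (hh : AbsolutelyMonotone h)
    (k ε : ℕ) (hk : 1 ≤ k) (hε : ε ≤ 1) (hkε : 1 ≤ k - 1 + ε)
    (δ : ℝ) (hδ : 0 ≤ δ)
    (M : ℕ → ℕ) (hM : ∀ n, 2 ≤ n → 2 ≤ M n)
    (hlim : Filter.Tendsto (fun n : ℕ => (M n : ℝ) / (n : ℝ) ^ (k - 1 + ε))
      Filter.atTop (nhds ((2 - (ε : ℝ)) / (Nat.factorial (k - 1 + ε) : ℝ) + δ)))
    (E : ℕ → ℕ → ℝ)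
    (hE : ∀ n m : ℕ, E n m = sInf {e : ℝ | ∃ C : Finset (EuclideanSpace ℝ (Fin n)),
      (C : Set (EuclideanSpace ℝ (Fin n))) ⊆ Metric.sphere 0 1 ∧ C.card = m ∧
        e = sphereEnergy n h C}) :
    h 0 ≤ Filter.liminf (fun n : ℕ => E n (M n) / (M n : ℝ) ^ 2) Filter.atTop := by
  classical
  obtain ⟨hconv, hmono⟩ := myDerivFacts hh
  have hnonneg : ∀ t ∈ Set.Ico (-1:ℝ) 1, 0 ≤ h t := by
    intro t ht
    have := hh.2 0 t ht
    rwa [iteratedDerivWithin_zero] at this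
  set s : ℕ := k + 1 with hsdef
  set e : ℕ := k - 1 + ε with hedef
  have hes : e < s := by omega
  have hs1 : 1 ≤ s := by omega
  have hspos : (0:ℝ) < (s:ℝ) := by exact_mod_cast hs1
  set L : ℝ := (2 - (ε : ℝ)) / (Nat.factorial e : ℝ) + δ with hLdef
  -- M n → ∞ (as reals)
  have hMtop : Filter.Tendsto (fun n : ℕ => (M n : ℝ)) Filter.atTop Filter.atTop := by
    have hpow : Filter.Tendsto (fun n : ℕ => ((n:ℝ)) ^ e) Filter.atTop Filter.atTop :=
      (tendsto_pow_atTop (by omega : e ≠ 0)).comp tendsto_natCast_atTop_atTop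
    have hLpos : 0 < L := by
      have h1 : (ε:ℝ) ≤ 1 := by exact_mod_cast hε
      have h2 : (0:ℝ) < (Nat.factorial e : ℝ) := by positivity
      have : 0 < (2 - (ε : ℝ)) / (Nat.factorial e : ℝ) := by
        apply div_pos (by linarith) h2
      rw [hLdef]; linarith
    have hmul := Filter.Tendsto.pos_mul_atTop hLpos hlim hpow
    apply hmul.congr'
    filter_upwards [Filter.eventually_ge_atTop 1] with n hn1
    have : ((n:ℝ)) ^ e ≠ 0 := by
      have : (0:ℝ) < (n:ℝ) := by exact_mod_cast hn1
      positivity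
    field_simp
  -- the comparison sequence
  set t : ℕ → ℝ := fun n => -1 / ((M n : ℝ) - 1) with htdef
  set g : ℕ → ℝ := fun n => (1 - ((M n : ℝ))⁻¹) * h (t n) with hgdef
  have hM2 : ∀ᶠ n : ℕ in Filter.atTop, 2 ≤ M n := by
    filter_upwards [Filter.eventually_ge_atTop 2] with n hn
    exact hM n hn
  have htmem : ∀ᶠ n : ℕ in Filter.atTop, t n ∈ Set.Ico (-1:ℝ) 1 := by
    filter_upwards [hM2] with n hn
    have hm1 : (1:ℝ) ≤ (M n : ℝ) - 1 := by
      have : (2:ℝ) ≤ (M n : ℝ) := by exact_mod_cast hn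
      linarith
    constructor
    · show -1 ≤ -1 / ((M n : ℝ) - 1)
      rw [neg_div, neg_le_neg_iff, div_le_one (by linarith)]
      linarith
    · have : t n < 0 := by
        show -1 / ((M n : ℝ) - 1) < 0
        apply div_neg_of_neg_of_pos <;> linarith
      linarith
  -- g tends to h 0
  have hg : Filter.Tendsto g Filter.atTop (nhds (h 0)) := by
    have hM1top : Filter.Tendsto (fun n : ℕ => (M n : ℝ) - 1) Filter.atTop Filter.atTop :=
      Filter.tendsto_atTop_add_const_right _ (-1) hMtop
    have ht0 : Filter.Tendsto t Filter.atTop (nhds 0) := by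
      have hinv : Filter.Tendsto (fun n : ℕ => ((M n : ℝ) - 1)⁻¹) Filter.atTop (nhds 0) :=
        tendsto_inv_atTop_zero.comp hM1top
      have := hinv.neg
      rw [neg_zero] at this
      apply this.congr
      intro n
      show -((M n : ℝ) - 1)⁻¹ = -1 / ((M n : ℝ) - 1)
      rw [neg_div, one_div]
    have hht : Filter.Tendsto (fun n => h (t n)) Filter.atTop (nhds (h 0)) := by
      have hcw : ContinuousWithinAt h (Set.Ico (-1:ℝ) 1) 0 :=
        hh.1.continuousOn 0 ⟨by norm_num, by norm_num⟩
      apply hcw.tendsto.comp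
      rw [tendsto_nhdsWithin_iff]
      exact ⟨ht0, htmem⟩
    have hinvM : Filter.Tendsto (fun n : ℕ => ((M n : ℝ))⁻¹) Filter.atTop (nhds 0) :=
      tendsto_inv_atTop_zero.comp hMtop
    have h1 : Filter.Tendsto (fun n : ℕ => 1 - ((M n : ℝ))⁻¹) Filter.atTop (nhds 1) := by
      have := (tendsto_const_nhds (x := (1:ℝ)) (f := Filter.atTop (α := ℕ))).sub hinvM
      rwa [sub_zero] at this
    have := h1.mul hht
    rwa [one_mul] at this
  -- the eventual bounds
  set B : ℝ := h (1 - 1 / (s:ℝ)) with hBdef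
  have hBmem : (1 - 1 / (s:ℝ)) ∈ Set.Ico (-1:ℝ) 1 := by
    constructor
    · have : 1 / (s:ℝ) ≤ 1 := by
        rw [div_le_one hspos]; exact_mod_cast hs1
      linarith
    · have : 0 < 1 / (s:ℝ) := by positivity
      linarith
  have hkey : ∀ᶠ n : ℕ in Filter.atTop,
      g n ≤ E n (M n) / (M n : ℝ) ^ 2 ∧ E n (M n) / (M n : ℝ) ^ 2 ≤ B := by
    filter_upwards [hM2, myEventuallyChoose hes hlim, htmem] with n hn2 hch htm
    set m : ℕ := M n with hmdef
    have hm2R : (2:ℝ) ≤ (m:ℝ) := by exact_mod_cast hn2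
    have hmpos : (0:ℝ) < (m:ℝ) := by linarith
    have hm2pos : (0:ℝ) < (m:ℝ) ^ 2 := by positivity
    obtain ⟨C, hCs, hCc, hCi⟩ := myGoodConfig hs1 hch
    have hCnorm : ∀ x ∈ C, ‖x‖ = 1 := by
      intro x hx
      have := hCs hx
      rwa [mem_sphere_zero_iff_norm] at this
    -- the set of energies
    set SS : Set ℝ := {e : ℝ | ∃ C : Finset (EuclideanSpace ℝ (Fin n)),
      (C : Set (EuclideanSpace ℝ (Fin n))) ⊆ Metric.sphere 0 1 ∧ C.card = m ∧
        e = sphereEnergy n h C} with hSS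
    have hlow : ∀ x ∈ SS, (m : ℝ) * ((m : ℝ) - 1) * h (-1 / ((m : ℝ) - 1)) ≤ x := by
      rintro x ⟨C', hC's, hC'c, rfl⟩
      exact myEnergyLower hconv hmono hn2 C' hC's hC'c
    have hmemSS : sphereEnergy n h C ∈ SS := ⟨C, hCs, hCc, rfl⟩
    have hEeq : E n m = sInf SS := hE n m
    have hElow : (m : ℝ) * ((m : ℝ) - 1) * h (-1 / ((m : ℝ) - 1)) ≤ E n m := by
      rw [hEeq]
      exact le_csInf ⟨_, hmemSS⟩ hlow
    have hEup : E n m ≤ sphereEnergy n h C := by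
      rw [hEeq]
      exact csInf_le ⟨_, hlow⟩ hmemSS
    -- upper bound on the energy of the good configuration
    have henergyUp : sphereEnergy n h C ≤ (m:ℝ) ^ 2 * B := by
      have hsum : sphereEnergy n h C ≤ (C.offDiag.card : ℝ) * B := by
        rw [sphereEnergy, ← nsmul_eq_mul]
        apply Finset.sum_le_card_nsmul
        intro p hp
        rw [Finset.mem_offDiag] at hp
        have hzmem : ⟪p.1, p.2⟫ ∈ Set.Ico (-1:ℝ) 1 :=
          myInnerMem (hCnorm _ hp.1) (hCnorm _ hp.2.1) hp.2.2
        exact hmono hzmem hBmem (hCi _ hp.1 _ hp.2.1 hp.2.2)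
      have hBnn : 0 ≤ B := hnonneg _ hBmem
      have hcardOff : ((C.offDiag.card : ℝ)) ≤ (m:ℝ) ^ 2 := by
        rw [Finset.offDiag_card, hCc]
        have h1 : m * m - m ≤ m * m := Nat.sub_le _ _
        have : ((m * m - m : ℕ) : ℝ) ≤ ((m * m : ℕ) : ℝ) := by exact_mod_cast h1
        push_cast at this ⊢
        nlinarith
      calc sphereEnergy n h C ≤ (C.offDiag.card : ℝ) * B := hsum
        _ ≤ (m:ℝ) ^ 2 * B := mul_le_mul_of_nonneg_right hcardOff hBnn
    constructor
    · -- g n ≤ E / m²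
      have hgeq : g n = (m : ℝ) * ((m : ℝ) - 1) * h (-1 / ((m : ℝ) - 1)) / (m:ℝ) ^ 2 := by
        show (1 - ((M n : ℝ))⁻¹) * h (-1 / ((M n : ℝ) - 1)) = _
        have hmne : (m:ℝ) ≠ 0 := ne_of_gt hmpos
        rw [← hmdef]
        field_simp
      rw [hgeq]
      exact div_le_div_of_nonneg_right hElow (le_of_lt hm2pos) |>.trans_eq rfl
    · -- E / m² ≤ B
      rw [div_le_iff₀ hm2pos]
      calc E n m ≤ sphereEnergy n h C := hEup
        _ ≤ (m:ℝ) ^ 2 * B := henergyUp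
        _ = B * (m:ℝ) ^ 2 := by ring
  -- conclude via liminf
  have hco : Filter.IsCoboundedUnder (· ≥ ·) Filter.atTop
      (fun n : ℕ => E n (M n) / (M n : ℝ) ^ 2) :=
    Filter.isCoboundedUnder_ge_of_eventually_le Filter.atTop
      (hkey.mono fun n hn => hn.2)
  have hbd : Filter.IsBoundedUnder (· ≥ ·) Filter.atTop g := hg.isBoundedUnder_ge
  have hle := Filter.liminf_le_liminf (hkey.mono fun n hn => hn.1) hbd hco
  rwa [hg.liminf_eq] at hle
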